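/- arXiv:1909.13286 — 3 statements merged into one kernel-verified Lean document; each statement's English description precedes it below -/
import Mathlib

section
/- Let $s\le k$ be positive integers and $\alpha_1,\alpha_2,\theta>0$. Let $X_1,\dots,X_k$ be i.i.d. random variables with Pareto distribution $P(\alpha_1,\theta)$ and let $Y$ be independent of them with Pareto distribution $P(\alpha_2,\theta)$. Then $P\big(\text{at least } s \text{ of } X_1,\dots,X_k \text{ exceed } Y\big) = \sum_{p=s}^{k}\sum_{u=0}^{k-p}(-1)^{u}\binom{k}{p}\binom{k-p}{u}\frac{\alpha_2}{\alpha_1(p+u)+\alpha_2}$. In particular this probability does not depend on $\theta$. -/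
/-!
Condition on the stress `Y = y ≥ θ`: the events `{y < Xᵢ}` are independent with probability
`(θ / y) ^ α₁` each, so `P(Y < Xᵢ for all i ∈ S) = E[(θ / Y) ^ (α₁ |S|)]`. Multiplying the
`P(α₂, θ)` density by `(θ / y) ^ b` gives `α₂ / (α₂ + b)` times the `P(α₂ + b, θ)` density, hence
this expectation is `α₂ / (α₁ |S| + α₂)`. It depends on `S` only through `|S|`, so
inclusion–exclusion over the components that do not exceed `Y`, summed over all sets of at least
`s` exceeding components, gives the double sum.
-/

open MeasureTheory ProbabilityTheory Finset
open scoped Classical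

namespace ProbabilityTheory

open Set

section Pareto

variable {t r x : ℝ}

lemma paretoMeasure_Iio_self : paretoMeasure t r (Iio t) = 0 := by
  rw [paretoMeasure, withDensity_apply _ measurableSet_Iio, lintegral_paretoPDF_of_le le_rfl]

lemma ae_le_paretoMeasure : ∀ᵐ y ∂paretoMeasure t r, t ≤ y :=
  ae_iff.2 <| by simp only [not_le]; exact paretoMeasure_Iio_self

lemma paretoMeasure_Iic_of_lt (hx : x < t) : paretoMeasure t r (Iic x) = 0 :=
  measure_mono_null (Iic_subset_Iio.2 hx) paretoMeasure_Iio_self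

lemma paretoMeasure_Ioi (ht : 0 < t) (hr : 0 < r) (hx : t ≤ x) :
    paretoMeasure t r (Ioi x) = ENNReal.ofReal ((t / x) ^ r) := by
  have hx0 : 0 < x := ht.trans_le hx
  rw [paretoMeasure, withDensity_apply _ measurableSet_Ioi,
    setLIntegral_congr_fun measurableSet_Ioi fun y (hy : x < y) ↦ paretoPDF_of_le (hx.trans hy.le),
    ← ofReal_integral_eq_lintegral_ofReal]
  · rw [integral_const_mul, integral_Ioi_rpow_of_lt (by linarith) hx0, Real.div_rpow ht.le hx0.le,
      show -(r + 1) + 1 = -r by ring, Real.rpow_neg hx0.le]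
    field_simp
  · exact (integrableOn_Ioi_rpow_of_lt (by linarith) hx0).const_mul _
  · exact (ae_restrict_iff' measurableSet_Ioi).2 <| ae_of_all _ fun y (hy : x < y) ↦ by
      have := hx0.trans hy
      positivity

lemma paretoMeasure_Iic (ht : 0 < t) (hr : 0 < r) (hx : t ≤ x) :
    paretoMeasure t r (Iic x) = ENNReal.ofReal (1 - (t / x) ^ r) := by
  have := isProbabilityMeasure_paretoMeasure ht hr
  rw [← compl_Ioi, prob_compl_eq_one_sub measurableSet_Ioi, paretoMeasure_Ioi ht hr hx,
    ← ENNReal.ofReal_one,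
    ← ENNReal.ofReal_sub _ (Real.rpow_nonneg (div_nonneg ht.le (ht.le.trans hx)) _)]

lemma ofReal_div_rpow_mul_paretoPDF (ht : 0 < t) (hr : 0 < r) {b : ℝ} (hrb : 0 < r + b) (y : ℝ) :
    ENNReal.ofReal ((t / y) ^ b) * paretoPDF t r y
      = ENNReal.ofReal (r / (r + b)) * paretoPDF t (r + b) y := by
  rcases lt_or_ge y t with hy | hy
  · simp [paretoPDF_of_lt hy]
  have hy0 : 0 < y := ht.trans_le hy
  rw [paretoPDF_of_le hy, paretoPDF_of_le hy, ← ENNReal.ofReal_mul (by positivity),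
    ← ENNReal.ofReal_mul (by positivity)]
  congr 1
  rw [Real.div_rpow ht.le hy0.le, Real.rpow_add ht, show -(r + b + 1) = -(r + 1) + -b by ring,
    Real.rpow_add hy0, Real.rpow_neg hy0.le b]
  field_simp

lemma lintegral_div_rpow_paretoMeasure (ht : 0 < t) (hr : 0 < r) {b : ℝ} (hrb : 0 < r + b) :
    ∫⁻ y, ENNReal.ofReal ((t / y) ^ b) ∂paretoMeasure t r = ENNReal.ofReal (r / (r + b)) := by
  have hpdf (a : ℝ) : Measurable (paretoPDF t a) := (measurable_paretoPDFReal t a).ennreal_ofReal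
  rw [paretoMeasure, lintegral_withDensity_eq_lintegral_mul _ (hpdf r) (by fun_prop)]
  simp_rw [Pi.mul_apply, mul_comm (paretoPDF t r _), ofReal_div_rpow_mul_paretoPDF ht hr hrb]
  rw [lintegral_const_mul _ (hpdf _), lintegral_paretoPDF_eq_one ht hrb, mul_one]

end Pareto

section

variable {Ω : Type*} [MeasurableSpace Ω] {μ : Measure Ω}

lemma measure_lt_eq_ofReal_one_sub [IsProbabilityMeasure μ] {W : Ω → ℝ} (hW : Measurable W)
    (y : ℝ) : μ {ω | y < W ω} = ENNReal.ofReal (1 - (μ {ω | W ω ≤ y}).toReal) := by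
  have hle : MeasurableSet {ω | W ω ≤ y} := measurableSet_le hW measurable_const
  simp_rw [← not_le]
  rw [← Set.compl_ofPred, prob_compl_eq_one_sub hle, ← ENNReal.ofReal_one,
    ← ENNReal.ofReal_toReal (measure_ne_top μ _), ← ENNReal.ofReal_sub _ ENNReal.toReal_nonneg,
    ENNReal.toReal_ofReal ENNReal.toReal_nonneg]

lemma map_eq_paretoMeasure [IsProbabilityMeasure μ] {W : Ω → ℝ} (hW : Measurable W) {t r : ℝ}
    (ht : 0 < t) (hr : 0 < r)
    (hcdf : ∀ x, t ≤ x → (μ {ω | W ω ≤ x}).toReal = 1 - (t / x) ^ r)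
    (hcdf0 : ∀ x, x < t → μ {ω | W ω ≤ x} = 0) :
    μ.map W = paretoMeasure t r := by
  have := isProbabilityMeasure_paretoMeasure ht hr
  refine Measure.ext_of_Iic _ _ fun x ↦ ?_
  rw [Measure.map_apply hW measurableSet_Iic]
  rcases lt_or_ge x t with hx | hx
  · exact (hcdf0 x hx).trans (paretoMeasure_Iic_of_lt hx).symm
  · rw [paretoMeasure_Iic ht hr hx, ← hcdf x hx, ENNReal.ofReal_toReal (measure_ne_top μ _)]
    rfl

lemma iIndepFun.indepFun_none_some {ι β : Type*} [Fintype ι] [MeasurableSpace β]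
    {f : Option ι → Ω → β} (hf : iIndepFun f μ) (hmeas : ∀ i, Measurable (f i)) :
    IndepFun (f none) (fun ω i ↦ f (some i) ω) μ := by
  have h := hf.indepFun_finset {none} (univ.map .some) (by simp) hmeas
  exact h.comp (φ := fun g : ({none} : Finset (Option ι)) → β ↦ g ⟨none, mem_singleton_self _⟩)
    (ψ := fun (g : univ.map .some → β) i ↦ g ⟨some i, by simp⟩) (by fun_prop) (by fun_prop)

lemma IndepFun.measure_preimage_prodMk [IsFiniteMeasure μ] {β γ : Type*} [MeasurableSpace β]
    [MeasurableSpace γ] {Y : Ω → β} {V : Ω → γ} (h : IndepFun Y V μ) (hY : Measurable Y)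
    (hV : Measurable V) {A : Set (β × γ)} (hA : MeasurableSet A) :
    μ ((fun ω ↦ (Y ω, V ω)) ⁻¹' A) = ∫⁻ y, μ (V ⁻¹' {v | (y, v) ∈ A}) ∂μ.map Y := by
  rw [← Measure.map_apply (hY.prodMk hV) hA,
    (indepFun_iff_map_prod_eq_prod_map_map hY.aemeasurable hV.aemeasurable).1 h,
    Measure.prod_apply hA]
  exact lintegral_congr fun y ↦ Measure.map_apply hV (measurable_prodMk_left hA)

lemma measure_biInter_lt_eq_lintegral [IsFiniteMeasure μ] {ι : Type*} [Fintype ι] {Y : Ω → ℝ}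
    {X : ι → Ω → ℝ} (hY : Measurable Y) (hX : ∀ i, Measurable (X i))
    (hind : iIndepFun (fun o ↦ Option.elim o Y X) μ) (S : Finset ι) :
    μ (⋂ i ∈ S, {ω | Y ω < X i ω}) = ∫⁻ y, ∏ i ∈ S, μ {ω | y < X i ω} ∂μ.map Y := by
  have hmeas : ∀ o, Measurable (Option.elim o Y X) := by rintro (_ | i); exacts [hY, hX i]
  have hA : MeasurableSet {p : ℝ × (ι → ℝ) | ∀ i ∈ S, p.1 < p.2 i} := by
    simp_rw [Set.ofPred_forall]
    exact .biInter S.countable_toSet fun i _ ↦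
      measurableSet_lt measurable_fst ((measurable_pi_apply i).comp measurable_snd)
  have := (hind.indepFun_none_some hmeas).measure_preimage_prodMk hY
    (measurable_pi_lambda _ hX) hA
  convert this using 1
  · congr 1; ext; simp
  refine lintegral_congr fun y ↦ ?_
  rw [← (hind.precomp (Option.some_injective ι)).meas_biInter]
  · congr 1; ext; simp
  · exact fun i _ ↦ ⟨Ioi y, measurableSet_Ioi, rfl⟩

end

end ProbabilityTheory

namespace MeasureTheory

open Set

section InclusionExclusion

variable {Ω ι : Type*} [MeasurableSpace Ω] {μ : Measure Ω} [IsFiniteMeasure μ] {B : ι → Set Ω}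

lemma measureReal_inter_biInter_compl (hB : ∀ i, MeasurableSet (B i)) (C : Finset ι)
    (A : Set Ω) :
    μ.real (A ∩ ⋂ i ∈ C, (B i)ᶜ) = ∑ U ∈ C.powerset, (-1) ^ #U * μ.real (A ∩ ⋂ i ∈ U, B i) := by
  induction C using Finset.induction_on generalizing A with
  | empty => simp
  | @insert j C hj ih =>
    have hdiff : A ∩ ⋂ i ∈ insert j C, (B i)ᶜ = (A ∩ ⋂ i ∈ C, (B i)ᶜ) \ B j := by
      ext; simp; tauto
    have hinter : (A ∩ ⋂ i ∈ C, (B i)ᶜ) ∩ B j = (A ∩ B j) ∩ ⋂ i ∈ C, (B i)ᶜ := by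
      ext; simp; tauto
    have hsplit := measureReal_inter_add_sdiff (μ := μ) (s := A ∩ ⋂ i ∈ C, (B i)ᶜ) (hB j)
    rw [hdiff, eq_sub_of_add_eq' hsplit, hinter, ih, ih, Finset.sum_powerset_insert hj,
      sub_eq_add_neg, ← Finset.sum_neg_distrib]
    congr 1
    refine Finset.sum_congr rfl fun U hU ↦ ?_
    have hjU : j ∉ U := fun h ↦ hj (Finset.mem_powerset.1 hU h)
    rw [Finset.card_insert_of_notMem hjU, Finset.set_biInter_insert, ← inter_assoc, pow_succ]
    ring

end InclusionExclusion

section Exchangeable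

variable {Ω ι : Type*} [Fintype ι] {B : ι → Set Ω}

lemma setOf_filter_mem_eq (T : Finset ι) :
    {ω | ({i | ω ∈ B i} : Finset ι) = T} = (⋂ i ∈ T, B i) ∩ ⋂ i ∈ Tᶜ, (B i)ᶜ := by
  ext ω; simp [Finset.ext_iff]; grind

variable [MeasurableSpace Ω] {μ : Measure Ω} [IsFiniteMeasure μ] {R : ℕ → ℝ}

lemma measureReal_filter_mem_eq (hB : ∀ i, MeasurableSet (B i))
    (hR : ∀ V : Finset ι, μ.real (⋂ i ∈ V, B i) = R #V) (T : Finset ι) :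
    μ.real {ω | ({i | ω ∈ B i} : Finset ι) = T} = ∑ u ∈ range (Fintype.card ι - #T + 1),
      (Fintype.card ι - #T).choose u • ((-1) ^ u * R (#T + u)) := by
  rw [setOf_filter_mem_eq, measureReal_inter_biInter_compl hB, ← card_compl,
    ← sum_powerset_apply_card]
  refine sum_congr rfl fun U hU ↦ ?_
  have hTU : Disjoint T U := disjoint_compl_right.mono_right (mem_powerset.1 hU)
  rw [← Finset.set_biInter_inter, hR, card_union_of_disjoint hTU]

theorem measureReal_le_card_filter_mem (hB : ∀ i, MeasurableSet (B i))
    (hR : ∀ V : Finset ι, μ.real (⋂ i ∈ V, B i) = R #V) (s : ℕ) :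
    μ.real {ω | s ≤ #({i | ω ∈ B i} : Finset ι)} =
      ∑ p ∈ Icc s (Fintype.card ι), ∑ u ∈ range (Fintype.card ι - p + 1),
        (-1) ^ u * (Fintype.card ι).choose p * (Fintype.card ι - p).choose u * R (p + u) := by
  have hfib (T : Finset ι) : MeasurableSet {ω | ({i | ω ∈ B i} : Finset ι) = T} := by
    rw [setOf_filter_mem_eq]
    exact .inter (.biInter T.countable_toSet fun i _ ↦ hB i)
      (.biInter Tᶜ.countable_toSet fun i _ ↦ (hB i).compl)
  have hIcc : Finset.Icc s (Fintype.card ι) = {p ∈ range (Fintype.card ι + 1) | s ≤ p} := by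
    ext; simp; omega
  rw [show {ω | s ≤ #({i | ω ∈ B i} : Finset ι)}
      = (fun ω ↦ ({i | ω ∈ B i} : Finset ι)) ⁻¹' ({T | s ≤ #T} : Finset (Finset ι)) by ext; simp,
    ← sum_measureReal_preimage_singleton _ fun T _ ↦ hfib T]
  simp only [Set.preimage, Set.mem_singleton_iff]
  rw [sum_congr rfl fun T _ ↦ measureReal_filter_mem_eq hB hR T, sum_filter,
    ← Finset.powerset_univ, sum_powerset_apply_card fun n ↦
      if s ≤ n then ∑ u ∈ range (Fintype.card ι - n + 1),
        (Fintype.card ι - n).choose u • ((-1) ^ u * R (n + u)) else 0,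
    card_univ, hIcc, sum_filter]
  refine sum_congr rfl fun p _ ↦ ?_
  split_ifs
  · simp only [smul_sum, nsmul_eq_mul]
    exact sum_congr rfl fun u _ ↦ by ring
  · simp

end Exchangeable

end MeasureTheory

lemma measureReal_biInter_lt_eq_of_pareto {Ω ι : Type*} [MeasurableSpace Ω] {μ : Measure Ω}
    [IsProbabilityMeasure μ] [Fintype ι] {α₁ α₂ θ : ℝ} (hα₁ : 0 ≤ α₁) (hα₂ : 0 < α₂)
    (hθ : 0 < θ) {X : ι → Ω → ℝ} {Y : Ω → ℝ} (hX : ∀ i, Measurable (X i)) (hY : Measurable Y)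
    (hXcdf : ∀ i x, θ ≤ x → (μ {ω | X i ω ≤ x}).toReal = 1 - (θ / x) ^ α₁)
    (hYcdf : ∀ x, θ ≤ x → (μ {ω | Y ω ≤ x}).toReal = 1 - (θ / x) ^ α₂)
    (hYcdf0 : ∀ x, x < θ → μ {ω | Y ω ≤ x} = 0)
    (hind : iIndepFun (fun o ↦ Option.elim o Y X) μ) (S : Finset ι) :
    μ.real (⋂ i ∈ S, {ω | Y ω < X i ω}) = α₂ / (α₁ * #S + α₂) := by
  have htail (y : ℝ) (hy : θ ≤ y) :
      ∏ i ∈ S, μ {ω | y < X i ω} = ENNReal.ofReal ((θ / y) ^ (α₁ * #S)) := by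
    have : 0 ≤ θ / y := div_nonneg hθ.le (hθ.le.trans hy)
    simp_rw [measure_lt_eq_ofReal_one_sub (hX _), hXcdf _ _ hy, sub_sub_cancel, prod_const,
      ← ENNReal.ofReal_pow (Real.rpow_nonneg this _), ← Real.rpow_natCast,
      ← Real.rpow_mul this]
  rw [measureReal_def, measure_biInter_lt_eq_lintegral hY hX hind,
    map_eq_paretoMeasure hY hθ hα₂ hYcdf hYcdf0,
    lintegral_congr_ae (ae_le_paretoMeasure.mono htail),
    lintegral_div_rpow_paretoMeasure hθ hα₂ (by positivity), ENNReal.toReal_ofReal (by positivity),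
    add_comm]

theorem pareto_multicomponent_reliability_general
    {Ω : Type*} [MeasurableSpace Ω] (μ : Measure Ω) [IsProbabilityMeasure μ]
    (s k : ℕ)
    (α₁ α₂ θ : ℝ) (hα₁ : 0 < α₁) (hα₂ : 0 < α₂) (hθ : 0 < θ)
    (X : Fin k → Ω → ℝ) (Y : Ω → ℝ)
    (hX : ∀ i, Measurable (X i)) (hY : Measurable Y)
    (hXcdf : ∀ (i : Fin k) (x : ℝ), θ ≤ x →
      (μ {ω | X i ω ≤ x}).toReal = 1 - (θ / x) ^ α₁)
    (hYcdf : ∀ x : ℝ, θ ≤ x → (μ {ω | Y ω ≤ x}).toReal = 1 - (θ / x) ^ α₂)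
    (hYcdf0 : ∀ x : ℝ, x < θ → μ {ω | Y ω ≤ x} = 0)
    (hindep : iIndepFun
      (fun o : Option (Fin k) => Option.elim o Y X) μ) :
    (μ {ω | s ≤ (Finset.univ.filter (fun i : Fin k => Y ω < X i ω)).card}).toReal
      = ∑ p ∈ Finset.Icc s k, ∑ u ∈ Finset.range (k - p + 1),
          (-1 : ℝ) ^ u * (k.choose p : ℝ) * ((k - p).choose u : ℝ)
            * (α₂ / (α₁ * ((p : ℝ) + (u : ℝ)) + α₂)) := by
  have h := measureReal_le_card_filter_mem (R := fun n : ℕ ↦ α₂ / (α₁ * n + α₂))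
    (fun i ↦ measurableSet_lt hY (hX i))
    (measureReal_biInter_lt_eq_of_pareto hα₁.le hα₂ hθ hX hY hXcdf hYcdf hYcdf0 hindep) s
  simp only [Fintype.card_fin, Nat.cast_add, Set.mem_ofPred_eq] at h
  rw [← measureReal_def]
  -- `convert` reconciles the `Real` and the classical decidability instances of the filter.
  convert h

/-- If `X 0, …, X (k-1)` are i.i.d. Pareto `P(α₁, θ)` strength variables and
`Y` is an independent Pareto `P(α₂, θ)` stress variable, then the probability that at least
`s` of the `X i` exceed `Y` equals
`∑_{p=s}^{k} ∑_{u=0}^{k-p} (-1)^u C(k,p) C(k-p,u) α₂/(α₁(p+u)+α₂)`,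
a quantity not depending on `θ`. -/
theorem pareto_multicomponent_reliability
    {Ω : Type*} [MeasurableSpace Ω] (μ : Measure Ω) [IsProbabilityMeasure μ]
    (s k : ℕ) (hs : 0 < s) (hsk : s ≤ k)
    (α₁ α₂ θ : ℝ) (hα₁ : 0 < α₁) (hα₂ : 0 < α₂) (hθ : 0 < θ)
    (X : Fin k → Ω → ℝ) (Y : Ω → ℝ)
    (hX : ∀ i, Measurable (X i)) (hY : Measurable Y)
    (hXcdf : ∀ (i : Fin k) (x : ℝ), θ ≤ x →
      (μ {ω | X i ω ≤ x}).toReal = 1 - (θ / x) ^ α₁)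
    (hXcdf0 : ∀ (i : Fin k) (x : ℝ), x < θ → μ {ω | X i ω ≤ x} = 0)
    (hYcdf : ∀ x : ℝ, θ ≤ x → (μ {ω | Y ω ≤ x}).toReal = 1 - (θ / x) ^ α₂)
    (hYcdf0 : ∀ x : ℝ, x < θ → μ {ω | Y ω ≤ x} = 0)
    (hindep : iIndepFun
      (fun o : Option (Fin k) => Option.elim o Y X) μ) :
    (μ {ω | s ≤ (Finset.univ.filter (fun i : Fin k => Y ω < X i ω)).card}).toReal
      = ∑ p ∈ Finset.Icc s k, ∑ u ∈ Finset.range (k - p + 1),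
          (-1 : ℝ) ^ u * (k.choose p : ℝ) * ((k - p).choose u : ℝ)
            * (α₂ / (α₁ * ((p : ℝ) + (u : ℝ)) + α₂)) :=
  pareto_multicomponent_reliability_general μ s k α₁ α₂ θ hα₁ hα₂ hθ X Y hX hY hXcdf hYcdf hYcdf0
    hindep
end

section
/- Let $n,m\ge 2$ be integers, $c>0$, and $u_1,u_2>0$ with $0<u_2<u_1/c$. Then $\frac{(n-1)(m-1)}{u_1^{n-1}u_2^{m-1}}\int_{0}^{u_2}\int_{c v_2}^{u_1}(u_1-v_1)^{n-2}(u_2-v_2)^{m-2}\,dv_1\,dv_2 \;=\; \sum_{z=0}^{n-1}(-1)^{z}\frac{\Gamma(m)\Gamma(n)}{\Gamma(m+z)\,\Gamma(n-z)}\left(\frac{c\,u_2}{u_1}\right)^{z}.$ -/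
/-!
Integrating out `v₁` leaves `(u₁ - c v₂)^(n-1) / (n-1)`. Expanding this binomially in `c v₂`
reduces the outer integral to Beta integrals `∫₀^{u₂} v^z (u₂ - v)^(m-2) dv`, whose factorial
closed form (obtained by integrating by parts) turns each binomial term into the Gamma ratio.
-/

open Finset intervalIntegral Nat

/-- The difference of the two sides is the integral of the derivative of
`x^(k+1) (s-x)^(j+1)`, which vanishes at `0` and `s`. -/
theorem integral_pow_succ_mul_sub_pow (s : ℝ) (k j : ℕ) :
    (j + 1 : ℝ) * ∫ x in (0 : ℝ)..s, x ^ (k + 1) * (s - x) ^ j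
      = (k + 1 : ℝ) * ∫ x in (0 : ℝ)..s, x ^ k * (s - x) ^ (j + 1) := by
  have hderiv : ∀ x ∈ Set.uIcc 0 s, HasDerivAt (fun x : ℝ ↦ x ^ (k + 1) * (s - x) ^ (j + 1))
      ((k + 1 : ℝ) * (x ^ k * (s - x) ^ (j + 1)) - (j + 1 : ℝ) * (x ^ (k + 1) * (s - x) ^ j))
      x := by
    intro x _
    refine ((hasDerivAt_pow (k + 1) x).fun_mul
      (((hasDerivAt_id' x).const_sub s).fun_pow (j + 1))).congr_deriv ?_
    push_cast
    ring
  have hftc := integral_eq_sub_of_hasDerivAt hderiv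
    (by apply Continuous.intervalIntegrable; fun_prop)
  rw [integral_sub (by apply Continuous.intervalIntegrable; fun_prop)
    (by apply Continuous.intervalIntegrable; fun_prop), integral_const_mul,
    integral_const_mul] at hftc
  simp only [sub_self, ne_eq, Nat.add_eq_zero_iff, one_ne_zero, and_false, not_false_eq_true,
    zero_pow, mul_zero, sub_zero, zero_mul] at hftc
  linarith

theorem integral_pow_mul_sub_pow (s : ℝ) (k j : ℕ) :
    ∫ x in (0 : ℝ)..s, x ^ k * (s - x) ^ j = s ^ (k + j + 1) * (k ! * j !) / (k + j + 1)! := by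
  induction k generalizing j with
  | zero =>
    simp only [pow_zero, one_mul, integral_comp_sub_left (fun x ↦ x ^ j) s, sub_self, sub_zero,
      integral_pow, ne_eq, Nat.add_eq_zero_iff, one_ne_zero, and_false, not_false_eq_true,
      zero_pow, zero_add, factorial_zero, cast_one, factorial_succ, cast_mul, cast_add]
    field_simp
  | succ k ih =>
    have hrec := integral_pow_succ_mul_sub_pow s k j
    rw [ih, show k + (j + 1) + 1 = k + 1 + j + 1 by ring, Nat.factorial_succ j] at hrec
    rw [Nat.factorial_succ k]
    push_cast at hrec ⊢
    field_simp at hrec ⊢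
    linear_combination hrec

theorem integral_sub_pow (a b : ℝ) (k : ℕ) :
    ∫ x in a..b, (b - x) ^ k = (b - a) ^ (k + 1) / (k + 1) := by
  simp [integral_comp_sub_left (fun x ↦ x ^ k) b]

theorem integral_sub_mul_pow_mul_sub_pow (a c s : ℝ) (N M : ℕ) :
    ∫ v in (0 : ℝ)..s, (a - c * v) ^ N * (s - v) ^ M
      = ∑ z ∈ range (N + 1), N.choose z * a ^ (N - z) * (-c) ^ z
          * (s ^ (z + M + 1) * (z ! * M !) / (z + M + 1)!) := by
  have hexpand : ∀ v : ℝ, (a - c * v) ^ N * (s - v) ^ M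
      = ∑ z ∈ range (N + 1), N.choose z * a ^ (N - z) * (-c) ^ z * (v ^ z * (s - v) ^ M) := by
    intro v
    rw [sub_eq_neg_add, add_pow, sum_mul]
    refine sum_congr rfl fun z _ ↦ ?_
    ring
  simp_rw [hexpand]
  rw [integral_finsetSum fun z _ ↦ by apply Continuous.intervalIntegrable; fun_prop]
  simp_rw [integral_const_mul, integral_pow_mul_sub_pow]

theorem Real.Gamma_mul_Gamma_div_Gamma_mul_Gamma (M N z : ℕ) (hz : z ≤ N) :
    Real.Gamma ((M + 1 : ℕ) : ℝ) * Real.Gamma ((N + 1 : ℕ) : ℝ)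
        / (Real.Gamma ((M + 1 + z : ℕ) : ℝ) * Real.Gamma ((N + 1 - z : ℕ) : ℝ))
      = M ! * N ! / ((M + z)! * (N - z)!) := by
  rw [Nat.add_right_comm, Nat.sub_add_comm hz]
  simp only [Nat.cast_succ, Real.Gamma_nat_eq_factorial]

theorem umvue_double_integral_case1_general
    (n m : ℕ) (hn : 2 ≤ n) (hm : 2 ≤ m)
    (c u₁ u₂ : ℝ) (hu₁ : 0 < u₁) (hu₂ : 0 < u₂) :
    ((n : ℝ) - 1) * ((m : ℝ) - 1) / (u₁ ^ (n - 1) * u₂ ^ (m - 1)) *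
        ∫ v₂ in (0 : ℝ)..u₂, ∫ v₁ in (c * v₂)..u₁,
          (u₁ - v₁) ^ (n - 2) * (u₂ - v₂) ^ (m - 2)
      = ∑ z ∈ Finset.range n,
          (-1 : ℝ) ^ z *
            (Real.Gamma (m : ℝ) * Real.Gamma (n : ℝ)
              / (Real.Gamma ((m + z : ℕ) : ℝ) * Real.Gamma ((n - z : ℕ) : ℝ)))
            * (c * u₂ / u₁) ^ z := by
  obtain ⟨N, rfl⟩ : ∃ N, n = N + 2 := ⟨n - 2, by omega⟩
  obtain ⟨M, rfl⟩ : ∃ M, m = M + 2 := ⟨m - 2, by omega⟩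
  have hinner : ∀ v₂ : ℝ, ∫ v₁ in (c * v₂)..u₁, (u₁ - v₁) ^ N * (u₂ - v₂) ^ M
      = (u₁ - c * v₂) ^ (N + 1) * (u₂ - v₂) ^ M / (N + 1) := by
    intro v₂
    rw [integral_mul_const, integral_sub_pow, div_mul_eq_mul_div]
  rw [show N + 2 - 1 = N + 1 from rfl, show M + 2 - 1 = M + 1 from rfl]
  simp only [Nat.add_sub_cancel, hinner, integral_div, integral_sub_mul_pow_mul_sub_pow,
    sum_div, mul_sum]
  refine sum_congr rfl fun z hz_mem ↦ ?_
  have hz : z ≤ N + 1 := mem_range_succ_iff.mp hz_mem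
  rw [Real.Gamma_mul_Gamma_div_Gamma_mul_Gamma (M + 1) (N + 1) z hz, Nat.cast_choose ℝ hz,
    show u₁ ^ (N + 1) = u₁ ^ (N + 1 - z) * u₁ ^ z by rw [← pow_add, Nat.sub_add_cancel hz],
    Nat.factorial_succ M, show z + M + 1 = M + 1 + z by ring]
  push_cast
  rw [div_pow, neg_pow]
  field_simp
  ring

/-- For integers `n, m ≥ 2`, `c > 0` and `0 < u₂ < u₁ / c`,
`((n-1)(m-1)/(u₁^(n-1) u₂^(m-1))) ∫₀^{u₂} ∫_{c v₂}^{u₁} (u₁-v₁)^(n-2) (u₂-v₂)^(m-2) dv₁ dv₂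
  = ∑_{z=0}^{n-1} (-1)^z (Γ(m)Γ(n) / (Γ(m+z)Γ(n-z))) (c u₂ / u₁)^z`. -/
theorem umvue_double_integral_case1
    (n m : ℕ) (hn : 2 ≤ n) (hm : 2 ≤ m)
    (c u₁ u₂ : ℝ) (hc : 0 < c) (hu₁ : 0 < u₁) (hu₂ : 0 < u₂)
    (h : u₂ < u₁ / c) :
    ((n : ℝ) - 1) * ((m : ℝ) - 1) / (u₁ ^ (n - 1) * u₂ ^ (m - 1)) *
        ∫ v₂ in (0 : ℝ)..u₂, ∫ v₁ in (c * v₂)..u₁,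
          (u₁ - v₁) ^ (n - 2) * (u₂ - v₂) ^ (m - 2)
      = ∑ z ∈ Finset.range n,
          (-1 : ℝ) ^ z *
            (Real.Gamma (m : ℝ) * Real.Gamma (n : ℝ)
              / (Real.Gamma ((m + z : ℕ) : ℝ) * Real.Gamma ((n - z : ℕ) : ℝ)))
            * (c * u₂ / u₁) ^ z :=
  umvue_double_integral_case1_general n m hn hm c u₁ u₂ hu₁ hu₂
end

section
/- Let $n,m\ge 2$ be integers, $c>0$, and $\alpha_1,\alpha_2>0$. Let $U_1,U_2$ be independent random variables with $U_1\sim\mathrm{Gamma}(n,\alpha_1)$ (shape $n$, rate $\alpha_1$) and $U_2\sim\mathrm{Gamma}(m,\alpha_2)$. Define $\varphi_{UM}(u_1,u_2)=\sum_{z=0}^{n-1}(-1)^{z}\frac{\Gamma(m)\Gamma(n)}{\Gamma(m+z)\Gamma(n-z)}\left(\frac{c u_2}{u_1}\right)^{z}$ if $0<u_2<u_1/c$, and $\varphi_{UM}(u_1,u_2)=\sum_{z=0}^{m-2}(-1)^{z}\frac{\Gamma(m)\Gamma(n)}{\Gamma(n+z+1)\Gamma(m-z-1)}\left(\frac{u_1}{c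 u_2}\right)^{z+1}$ if $0<u_1/c<u_2$. Then $E[\varphi_{UM}(U_1,U_2)]=\dfrac{\alpha_2}{c\,\alpha_1+\alpha_2}$, i.e. $\varphi_{UM}$ is an unbiased estimator of $\varphi(\alpha_1,\alpha_2)=\alpha_2/(c\alpha_1+\alpha_2)$. -/
/-!
Split `φ_UM` along `c U₂ < U₁` and its complement. On the first region the `z`-th term is
`E[(c U₂ / U₁)^z; c U₂ < U₁]`. Integrating out `U₁` leaves an upper incomplete Gamma integral,
i.e. a Poisson tail `e^{-x} ∑ⱼ x^j / j!` in `x = α₁ c U₂`; integrating out `U₂` then turns each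
Poisson weight into a negative-binomial weight `multichoose (m + z) j · p^(z+j) q^m`, where
`p = α₁ c / (α₁ c + α₂)` and `q = α₂ / (α₁ c + α₂)`. The Gamma coefficients of `φ_UM` cancel the
normalising constants, and the alternating sum over `z` collapses to
`q^m ∑_{k<n} multichoose (m-1) k · p^k`. The other region gives, in the same way,
`q p^n ∑_{k<m-1} multichoose n k · q^k`. The sum is `q` times the probability that in
Bernoulli(`p`) trials either `n` successes come before `m - 1` failures or the other way round,
which is `1`.
-/

open MeasureTheory ProbabilityTheory Finset

/-- The piecewise UMVUE kernel `φ_UM` of `φ(α₁,α₂) = α₂/(c α₁ + α₂)`: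
for `0 < u₂ < u₁/c` it is `∑_{z=0}^{n-1} (-1)^z Γ(m)Γ(n)/(Γ(m+z)Γ(n-z)) (c u₂/u₁)^z`,
and for `0 < u₁/c < u₂` it is
`∑_{z=0}^{m-2} (-1)^z Γ(m)Γ(n)/(Γ(n+z+1)Γ(m-z-1)) (u₁/(c u₂))^(z+1)`. -/
noncomputable def varphiUM (n m : ℕ) (c u₁ u₂ : ℝ) : ℝ :=
  if u₂ < u₁ / c then
    ∑ z ∈ Finset.range n,
      (-1 : ℝ) ^ z *
        (Real.Gamma (m : ℝ) * Real.Gamma (n : ℝ)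
          / (Real.Gamma ((m + z : ℕ) : ℝ) * Real.Gamma ((n - z : ℕ) : ℝ)))
        * (c * u₂ / u₁) ^ z
  else
    ∑ z ∈ Finset.range (m - 1),
      (-1 : ℝ) ^ z *
        (Real.Gamma (m : ℝ) * Real.Gamma (n : ℝ)
          / (Real.Gamma ((n + z + 1 : ℕ) : ℝ) * Real.Gamma ((m - z - 1 : ℕ) : ℝ)))
        * (u₁ / (c * u₂)) ^ (z + 1)

open Real Set
open scoped Nat

lemma integrableOn_Ioi_pow_mul_exp_neg_mul (k : ℕ) {a : ℝ} (ha : 0 < a) :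
    IntegrableOn (fun u : ℝ => u ^ k * exp (-(a * u))) (Ioi 0) := by
  simpa using integrableOn_rpow_mul_exp_neg_mul_rpow (p := 1) (s := k)
    (neg_one_lt_zero.trans_le k.cast_nonneg) zero_lt_one ha

lemma integral_Ioi_pow_mul_exp_neg_mul (k : ℕ) {a : ℝ} (ha : 0 < a) :
    ∫ u in Ioi 0, u ^ k * exp (-(a * u)) = k ! / a ^ (k + 1) := by
  have h := integral_rpow_mul_exp_neg_mul_Ioi (a := k + 1) (by positivity) ha
  simp only [add_sub_cancel_right, rpow_natCast, Gamma_nat_eq_factorial] at h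
  rw [h, ← rpow_natCast, div_rpow zero_le_one ha.le, one_rpow]
  push_cast
  ring

lemma integral_Ioi_pow_mul_exp_neg_mul_eq_sum (k : ℕ) {a : ℝ} (ha : 0 < a) (x : ℝ) :
    ∫ u in Ioi x, u ^ k * exp (-(a * u))
      = k ! / a ^ (k + 1) * exp (-(a * x)) * ∑ j ∈ range (k + 1), (a * x) ^ j / j ! := by
  have hshift : ∫ u in Ioi x, u ^ k * exp (-(a * u))
      = ∫ w in Ioi 0, (x + w) ^ k * exp (-(a * (x + w))) := by
    rw [← (measurePreserving_add_left volume x).setIntegral_preimage_emb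
      (measurableEmbedding_addLeft x), preimage_const_add_Ioi, sub_self]
  have hexpand : ∀ w, (x + w) ^ k * exp (-(a * (x + w)))
      = exp (-(a * x))
        * ∑ j ∈ range (k + 1), x ^ j * k.choose j * (w ^ (k - j) * exp (-(a * w))) := by
    intro w
    rw [add_pow, mul_add, neg_add, exp_add, sum_mul, mul_sum]
    exact sum_congr rfl fun j _ => by ring
  simp_rw [hshift, hexpand]
  rw [integral_const_mul, integral_finsetSum _ fun j _ =>
    (integrableOn_Ioi_pow_mul_exp_neg_mul (k - j) ha).const_mul _]
  simp_rw [integral_const_mul, integral_Ioi_pow_mul_exp_neg_mul _ ha, mul_sum]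
  refine sum_congr rfl fun j hj => ?_
  have hjk : j ≤ k := Nat.lt_succ_iff.mp (mem_range.mp hj)
  rw [Nat.cast_choose ℝ hjk, show k + 1 = j + (k - j) + 1 by omega]
  field_simp
  ring

lemma Gamma_natCast_eq_factorial {k : ℕ} (hk : k ≠ 0) : Gamma k = (k - 1)! := by
  obtain ⟨k, rfl⟩ := Nat.exists_eq_succ_of_ne_zero hk
  simpa using Gamma_nat_eq_factorial k

lemma Gamma_natCast_ne_zero {k : ℕ} (hk : k ≠ 0) : Gamma k ≠ 0 :=
  (Gamma_pos_of_pos (Nat.cast_pos.2 (Nat.pos_of_ne_zero hk))).ne'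

instance (a r : ℝ) : SFinite (gammaMeasure a r) :=
  inferInstanceAs (SFinite (volume.withDensity _))

lemma ae_nonneg_gammaMeasure (a r : ℝ) : ∀ᵐ u ∂gammaMeasure a r, 0 ≤ u := by
  simp only [ae_iff, not_le]
  exact (withDensity_apply _ measurableSet_Iio).trans (lintegral_gammaPDF_of_nonpos le_rfl)

lemma integral_gammaMeasure_natCast {n : ℕ} (hn : n ≠ 0) {r : ℝ} (hr : 0 < r) (g : ℝ → ℝ) :
    ∫ u, g u ∂gammaMeasure n r
      = r ^ n / (n - 1)! * ∫ u in Ioi 0, u ^ (n - 1) * exp (-(r * u)) * g u := by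
  rw [gammaMeasure, integral_withDensity_eq_integral_toReal_smul (f := gammaPDF n r)
      (measurable_gammaPDFReal _ _).ennreal_ofReal (ae_of_all _ fun _ => ENNReal.ofReal_lt_top),
    ← setIntegral_eq_integral_of_forall_compl_eq_zero (s := Ici 0), integral_Ici_eq_integral_Ioi,
    ← integral_const_mul]
  · refine setIntegral_congr_fun measurableSet_Ioi fun u (hu : 0 < u) => ?_
    obtain ⟨k, rfl⟩ := Nat.exists_eq_succ_of_ne_zero hn
    rw [gammaPDF, gammaPDFReal, if_pos hu.le, ENNReal.toReal_ofReal (by positivity)]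
    push_cast
    rw [add_sub_cancel_right, Gamma_nat_eq_factorial, ← Nat.cast_succ, rpow_natCast, rpow_natCast,
      smul_eq_mul]
    ring
  · intro u (hu : ¬ 0 ≤ u)
    simp [gammaPDF, gammaPDFReal, hu]

lemma integral_gammaMeasure_indicator_Ioi_div_pow {n z : ℕ} (hz : z < n) {r x : ℝ} (hr : 0 < r)
    (hx : 0 ≤ x) :
    ∫ u, (Ioi x).indicator (fun u => (x / u) ^ z) u ∂gammaMeasure n r
      = Gamma (n - z : ℕ) / Gamma n * exp (-(r * x))
        * ∑ j ∈ range (n - z), (r * x) ^ (z + j) / j ! := by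
  have hrestrict : ∀ u ∈ Ioi (0 : ℝ),
      u ^ (n - 1) * exp (-(r * u)) * (Ioi x).indicator (fun u => (x / u) ^ z) u
        = (Ioi x).indicator (fun u => x ^ z * (u ^ (n - 1 - z) * exp (-(r * u)))) u := by
    intro u (hu : 0 < u)
    by_cases hxu : x < u
    · rw [indicator_of_mem (show u ∈ Ioi x from hxu), indicator_of_mem (show u ∈ Ioi x from hxu),
        div_pow, ← pow_sub_mul_pow u (show z ≤ n - 1 by omega)]
      field_simp
    · simp [indicator_of_notMem (show u ∉ Ioi x from hxu)]
  rw [integral_gammaMeasure_natCast (by omega) hr,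
    setIntegral_congr_fun measurableSet_Ioi hrestrict, setIntegral_indicator measurableSet_Ioi,
    Ioi_inter_Ioi, max_eq_right hx, integral_const_mul,
    integral_Ioi_pow_mul_exp_neg_mul_eq_sum _ hr, show n - 1 - z + 1 = n - z by omega,
    Gamma_natCast_eq_factorial (by omega), Gamma_natCast_eq_factorial (by omega),
    show n - z - 1 = n - 1 - z by omega]
  simp only [mul_sum]
  refine sum_congr rfl fun j _ => ?_
  rw [← pow_sub_mul_pow r hz.le, pow_add]
  field_simp
  ring

lemma integral_gammaMeasure_indicator_Ici_div_pow {n z : ℕ} (hz : z < n) {r x : ℝ} (hr : 0 < r)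
    (hx : 0 ≤ x) :
    ∫ u, (Ici x).indicator (fun u => (x / u) ^ z) u ∂gammaMeasure n r
      = Gamma (n - z : ℕ) / Gamma n * exp (-(r * x))
        * ∑ j ∈ range (n - z), (r * x) ^ (z + j) / j ! := by
  rw [← integral_gammaMeasure_indicator_Ioi_div_pow hz hr hx]
  exact integral_congr_ae (indicator_ae_eq_of_ae_eq_set
    ((withDensity_absolutelyContinuous _ _).ae_eq Ioi_ae_eq_Ici).symm)

lemma integral_gammaMeasure_exp_neg_mul_mul_sum_pow {n : ℕ} (hn : n ≠ 0) {r s : ℝ} (hr : 0 < r)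
    (hsr : 0 < s + r) (z K : ℕ) :
    ∫ v, exp (-(s * v)) * (∑ j ∈ range K, (s * v) ^ (z + j) / j !) ∂gammaMeasure n r
      = Gamma (n + z : ℕ) / Gamma n
        * ∑ j ∈ range K,
            ((n + z).multichoose j : ℝ) * (s / (s + r)) ^ (z + j) * (r / (s + r)) ^ n := by
  have hexpand : ∀ v, v ^ (n - 1) * exp (-(r * v))
        * (exp (-(s * v)) * ∑ j ∈ range K, (s * v) ^ (z + j) / j !)
      = ∑ j ∈ range K, s ^ (z + j) / j ! * (v ^ (n - 1 + (z + j)) * exp (-((s + r) * v))) := by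
    intro v
    simp only [mul_sum]
    refine sum_congr rfl fun j _ => ?_
    rw [add_mul, neg_add, exp_add, pow_add, mul_pow]
    ring
  rw [integral_gammaMeasure_natCast hn hr]
  simp_rw [hexpand]
  rw [integral_finsetSum _ fun j _ =>
    (integrableOn_Ioi_pow_mul_exp_neg_mul _ hsr).const_mul _]
  simp_rw [integral_const_mul, integral_Ioi_pow_mul_exp_neg_mul _ hsr, mul_sum]
  refine sum_congr rfl fun j _ => ?_
  obtain ⟨k, rfl⟩ := Nat.exists_eq_add_one_of_ne_zero hn
  rw [Gamma_natCast_eq_factorial (by omega), Gamma_natCast_eq_factorial (by omega),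
    Nat.multichoose_eq]
  have hfact := Nat.add_choose_mul_factorial_mul_factorial (k + z) j
  simp only [Nat.add_sub_cancel, show k + 1 + z + j - 1 = k + z + j by omega,
    show k + 1 + z - 1 = k + z by omega, show k + (z + j) = k + z + j by omega] at hfact ⊢
  rw [← hfact]
  push_cast
  rw [div_pow, div_pow, show k + z + j + 1 = (z + j) + (k + 1) by omega]
  field_simp
  ring

lemma norm_indicator_Ici_div_pow_le_one {x : ℝ} (hx : 0 ≤ x) (z : ℕ) (u : ℝ) :
    ‖(Ici x).indicator (fun u => (x / u) ^ z) u‖ ≤ 1 := by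
  by_cases hxu : x ≤ u
  · rw [indicator_of_mem (show u ∈ Ici x from hxu), norm_pow,
      norm_of_nonneg (div_nonneg hx (hx.trans hxu))]
    exact pow_le_one₀ (div_nonneg hx (hx.trans hxu)) (div_le_one_of_le₀ hxu (hx.trans hxu))
  · simp [indicator_of_notMem (show u ∉ Ici x from hxu)]

section GammaProduct

variable {α β a b c : ℝ}

lemma integrable_indicator_Ioi_mul_div_pow (hα : 0 < α) (hβ : 0 < β) (ha : 0 < a) (hb : 0 < b)
    (hc : 0 < c) (z : ℕ) :
    Integrable (fun p : ℝ × ℝ => (Ioi (c * p.2)).indicator (fun u => (c * p.2 / u) ^ z) p.1)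
      ((gammaMeasure α a).prod (gammaMeasure β b)) := by
  have := isProbabilityMeasure_gammaMeasure hα ha
  have := isProbabilityMeasure_gammaMeasure hβ hb
  refine (integrable_const 1).mono' ?_ ?_
  · simp only [indicator_apply, Set.mem_Ioi]
    exact (Measurable.ite (measurableSet_lt (by fun_prop) (by fun_prop)) (by fun_prop)
      measurable_const).aestronglyMeasurable
  · filter_upwards [Measure.quasiMeasurePreserving_snd.ae (ae_nonneg_gammaMeasure β b)] with p hp
    exact (norm_indicator_le_of_subset Set.Ioi_subset_Ici_self _ _).trans
      (norm_indicator_Ici_div_pow_le_one (by positivity) z p.1)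

lemma integrable_indicator_Ici_div_div_pow (hα : 0 < α) (hβ : 0 < β) (ha : 0 < a) (hb : 0 < b)
    (hc : 0 < c) (z : ℕ) :
    Integrable (fun p : ℝ × ℝ => (Ici (p.1 / c)).indicator (fun v => (p.1 / c / v) ^ z) p.2)
      ((gammaMeasure α a).prod (gammaMeasure β b)) := by
  have := isProbabilityMeasure_gammaMeasure hα ha
  have := isProbabilityMeasure_gammaMeasure hβ hb
  refine (integrable_const 1).mono' ?_ ?_
  · simp only [indicator_apply, Set.mem_Ici]
    exact (Measurable.ite (measurableSet_le (by fun_prop) (by fun_prop)) (by fun_prop)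
      measurable_const).aestronglyMeasurable
  · filter_upwards [Measure.quasiMeasurePreserving_fst.ae (ae_nonneg_gammaMeasure α a)] with p hp
    exact norm_indicator_Ici_div_pow_le_one (by positivity) z p.2

variable {n m : ℕ}

lemma integral_indicator_Ioi_mul_div_pow {z : ℕ} (hz : z < n) (hm : m ≠ 0) (ha : 0 < a)
    (hb : 0 < b) (hc : 0 < c) :
    ∫ p : ℝ × ℝ, (Ioi (c * p.2)).indicator (fun u => (c * p.2 / u) ^ z) p.1
        ∂(gammaMeasure n a).prod (gammaMeasure m b)
      = Gamma (n - z : ℕ) / Gamma n * (Gamma (m + z : ℕ) / Gamma m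
        * ∑ j ∈ range (n - z), ((m + z).multichoose j : ℝ)
          * (a * c / (a * c + b)) ^ (z + j) * (b / (a * c + b)) ^ m) := by
  have hinner : ∀ᵐ v ∂gammaMeasure m b,
      ∫ u, (Ioi (c * v)).indicator (fun u => (c * v / u) ^ z) u ∂gammaMeasure n a
        = Gamma (n - z : ℕ) / Gamma n
          * (exp (-(a * c * v)) * ∑ j ∈ range (n - z), (a * c * v) ^ (z + j) / j !) := by
    filter_upwards [ae_nonneg_gammaMeasure m b] with v hv
    rw [integral_gammaMeasure_indicator_Ioi_div_pow hz ha (by positivity), mul_assoc a c v,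
      mul_assoc]
  rw [integral_prod_symm _ (integrable_indicator_Ioi_mul_div_pow (Nat.cast_pos.2 (by omega))
      (Nat.cast_pos.2 (Nat.pos_of_ne_zero hm)) ha hb hc z), integral_congr_ae hinner,
    integral_const_mul,
    integral_gammaMeasure_exp_neg_mul_mul_sum_pow hm hb (by positivity)]

lemma integral_indicator_Ici_div_div_pow {z : ℕ} (hz : z < m) (hn : n ≠ 0) (ha : 0 < a)
    (hb : 0 < b) (hc : 0 < c) :
    ∫ p : ℝ × ℝ, (Ici (p.1 / c)).indicator (fun v => (p.1 / c / v) ^ z) p.2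
        ∂(gammaMeasure n a).prod (gammaMeasure m b)
      = Gamma (m - z : ℕ) / Gamma m * (Gamma (n + z : ℕ) / Gamma n
        * ∑ j ∈ range (m - z), ((n + z).multichoose j : ℝ)
          * (b / (a * c + b)) ^ (z + j) * (a * c / (a * c + b)) ^ n) := by
  have hinner : ∀ᵐ u ∂gammaMeasure n a,
      ∫ v, (Ici (u / c)).indicator (fun v => (u / c / v) ^ z) v ∂gammaMeasure m b
        = Gamma (m - z : ℕ) / Gamma m
          * (exp (-(b / c * u)) * ∑ j ∈ range (m - z), (b / c * u) ^ (z + j) / j !) := by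
    filter_upwards [ae_nonneg_gammaMeasure n a] with u hu
    rw [integral_gammaMeasure_indicator_Ici_div_pow hz hb (by positivity), mul_assoc,
      ← mul_comm_div]
  have hq : b / c / (b / c + a) = b / (a * c + b) := by field_simp; ring
  have hp : a / (b / c + a) = a * c / (a * c + b) := by field_simp; ring
  rw [integral_prod _ (integrable_indicator_Ici_div_div_pow (Nat.cast_pos.2 (Nat.pos_of_ne_zero hn))
      (Nat.cast_pos.2 (by omega)) ha hb hc z), integral_congr_ae hinner, integral_const_mul,
    integral_gammaMeasure_exp_neg_mul_mul_sum_pow hn ha (by positivity), hq, hp]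

end GammaProduct

lemma sum_range_succ_multichoose_succ (A B : ℕ) (q : ℝ) :
    ∑ k ∈ range (B + 1), ((A + 1).multichoose k : ℝ) * q ^ k
      = ∑ k ∈ range (B + 1), (A.multichoose k : ℝ) * q ^ k
        + q * ∑ k ∈ range B, ((A + 1).multichoose k : ℝ) * q ^ k := by
  simp only [sum_range_succ' _ B, Nat.multichoose_succ_succ, Nat.multichoose_zero_right, mul_sum,
    Nat.cast_add, add_mul, sum_add_distrib]
  rw [add_right_comm]
  congr 2 with k
  ring

lemma Nat.multichoose_succ_comm (A B : ℕ) : (A + 1).multichoose B = (B + 1).multichoose A := by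
  rw [Nat.multichoose_eq, Nat.multichoose_eq, Nat.add_right_comm, Nat.add_sub_cancel,
    Nat.add_right_comm, Nat.add_sub_cancel, Nat.add_comm, Nat.choose_symm_add]

-- In Bernoulli(`p`) trials, either `A` successes come before `B + 1` failures or the reverse.
lemma pow_mul_sum_multichoose_add_pow_mul_sum_multichoose {p q : ℝ} (hpq : p + q = 1) (A B : ℕ) :
    q ^ (B + 1) * ∑ k ∈ range A, ((B + 1).multichoose k : ℝ) * p ^ k
      + p ^ A * ∑ k ∈ range (B + 1), (A.multichoose k : ℝ) * q ^ k = 1 := by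
  induction A with
  | zero => simp [sum_range_succ', Nat.multichoose_zero_succ]
  | succ A ih =>
    have hshift := sum_range_succ_multichoose_succ A B q
    rw [sum_range_succ _ B] at hshift ⊢
    rw [sum_range_succ, ← Nat.multichoose_succ_comm]
    linear_combination ih + p ^ A * hshift
      + p ^ A * (∑ k ∈ range B, ((A + 1).multichoose k : ℝ) * q ^ k
        + ((A + 1).multichoose B : ℝ) * q ^ B) * hpq

lemma sum_range_succ_neg_one_pow_mul_multichoose (N k : ℕ) :
    ∑ z ∈ range (k + 1), (-1 : ℝ) ^ z * ((N + 1 + z).multichoose (k - z) : ℝ)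
      = N.multichoose k := by
  -- Pascal's rule splits each term into two neighbouring terms of `(N + z).multichoose (k - z)`,
  -- so the alternating sum telescopes.
  have hstep : ∀ z ∈ range k, (-1 : ℝ) ^ z * ((N + 1 + z).multichoose (k - z) : ℝ)
      = (-1 : ℝ) ^ z * ((N + z).multichoose (k - z) : ℝ)
        - (-1 : ℝ) ^ (z + 1) * ((N + (z + 1)).multichoose (k - (z + 1)) : ℝ) := by
    intro z hz
    obtain ⟨i, rfl⟩ : ∃ i, k = z + i + 1 := ⟨k - z - 1, by grind⟩
    rw [show z + i + 1 - z = i + 1 by omega, show z + i + 1 - (z + 1) = i by omega,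
      show N + 1 + z = N + z + 1 by ring, Nat.multichoose_succ_succ, ← add_assoc]
    push_cast
    ring
  rw [sum_range_succ, sum_congr rfl hstep,
    sum_range_sub' (fun z => (-1 : ℝ) ^ z * ((N + z).multichoose (k - z) : ℝ))]
  simp

lemma sum_range_sum_range_neg_one_pow_mul_multichoose (N L : ℕ) (x : ℝ) :
    ∑ z ∈ range L, ∑ j ∈ range (L - z),
        (-1 : ℝ) ^ z * ((N + 1 + z).multichoose j : ℝ) * x ^ (z + j)
      = ∑ k ∈ range L, (N.multichoose k : ℝ) * x ^ k := by
  rw [← sum_range_diag_flip]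
  refine sum_congr rfl fun k _ => ?_
  rw [← sum_range_succ_neg_one_pow_mul_multichoose N k, sum_mul]
  refine sum_congr rfl fun z hz => ?_
  rw [Nat.add_sub_cancel' (Nat.lt_succ_iff.mp (mem_range.mp hz))]

lemma ProbabilityTheory.IndepFun.integral_comp_prodMk {Ω α β : Type*} [MeasurableSpace Ω]
    [MeasurableSpace α] [MeasurableSpace β] {μ : Measure Ω} [IsFiniteMeasure μ] {X : Ω → α}
    {Y : Ω → β} (hXY : IndepFun X Y μ) (hX : AEMeasurable X μ) (hY : AEMeasurable Y μ)
    {f : α × β → ℝ} (hf : AEStronglyMeasurable f ((μ.map X).prod (μ.map Y))) :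
    ∫ ω, f (X ω, Y ω) ∂μ = ∫ p, f p ∂(μ.map X).prod (μ.map Y) := by
  rw [← (indepFun_iff_map_prod_eq_prod_map_map hX hY).1 hXY] at hf ⊢
  exact (integral_map (hX.prodMk hY) hf).symm

-- The two branches of `varphiUM`, on `{u₂ < u₁ / c}` and on its complement, as functions of
-- `x = (u₁, u₂)`.
noncomputable def varphiUMBelow (n m : ℕ) (c : ℝ) (x : ℝ × ℝ) : ℝ :=
  ∑ z ∈ range n, (-1 : ℝ) ^ z * (Gamma m * Gamma n / (Gamma (m + z : ℕ) * Gamma (n - z : ℕ)))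
    * (Ioi (c * x.2)).indicator (fun u => (c * x.2 / u) ^ z) x.1

noncomputable def varphiUMAbove (n m : ℕ) (c : ℝ) (x : ℝ × ℝ) : ℝ :=
  ∑ z ∈ range (m - 1), (-1 : ℝ) ^ z
    * (Gamma m * Gamma n / (Gamma (n + z + 1 : ℕ) * Gamma (m - z - 1 : ℕ)))
    * (Ici (x.1 / c)).indicator (fun v => (x.1 / c / v) ^ (z + 1)) x.2

lemma varphiUM_eq_add (n m : ℕ) {c : ℝ} (hc : 0 < c) (x : ℝ × ℝ) :
    varphiUM n m c x.1 x.2 = varphiUMBelow n m c x + varphiUMAbove n m c x := by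
  have hregion : x.2 < x.1 / c ↔ x.1 ∈ Ioi (c * x.2) := by rw [lt_div_iff₀' hc]; rfl
  by_cases h : x.2 < x.1 / c
  · have h' : x.2 ∉ Ici (x.1 / c) := not_le.2 h
    simp [varphiUM, varphiUMBelow, varphiUMAbove, h, hregion.1 h, h']
  · have h' : x.2 ∈ Ici (x.1 / c) := not_lt.1 h
    simp [varphiUM, varphiUMBelow, varphiUMAbove, h, mt hregion.2 h, h', div_div]

section Branches

variable {n m : ℕ} {a b c : ℝ}

lemma integrable_varphiUMBelow (hn : n ≠ 0) (hm : m ≠ 0) (ha : 0 < a) (hb : 0 < b)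
    (hc : 0 < c) :
    Integrable (varphiUMBelow n m c) ((gammaMeasure n a).prod (gammaMeasure m b)) :=
  integrable_finsetSum _ fun z _ => (integrable_indicator_Ioi_mul_div_pow
    (by positivity) (by positivity) ha hb hc z).const_mul _

lemma integrable_varphiUMAbove (hn : n ≠ 0) (hm : m ≠ 0) (ha : 0 < a) (hb : 0 < b)
    (hc : 0 < c) :
    Integrable (varphiUMAbove n m c) ((gammaMeasure n a).prod (gammaMeasure m b)) :=
  integrable_finsetSum _ fun z _ => (integrable_indicator_Ici_div_div_pow
    (by positivity) (by positivity) ha hb hc (z + 1)).const_mul _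

lemma integral_varphiUMBelow (hn : n ≠ 0) (hm : m ≠ 0) (ha : 0 < a) (hb : 0 < b) (hc : 0 < c) :
    ∫ x, varphiUMBelow n m c x ∂(gammaMeasure n a).prod (gammaMeasure m b)
      = (b / (a * c + b)) ^ m
        * ∑ k ∈ range n, ((m - 1).multichoose k : ℝ) * (a * c / (a * c + b)) ^ k := by
  have hterm : ∀ z ∈ range n, ∫ x : ℝ × ℝ, (-1 : ℝ) ^ z
        * (Gamma m * Gamma n / (Gamma (m + z : ℕ) * Gamma (n - z : ℕ)))
        * (Ioi (c * x.2)).indicator (fun u => (c * x.2 / u) ^ z) x.1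
        ∂(gammaMeasure n a).prod (gammaMeasure m b)
      = (b / (a * c + b)) ^ m * ∑ j ∈ range (n - z),
          (-1 : ℝ) ^ z * ((m - 1 + 1 + z).multichoose j : ℝ) * (a * c / (a * c + b)) ^ (z + j) := by
    intro z hz
    have hzn := mem_range.1 hz
    have := Gamma_natCast_ne_zero hn
    have := Gamma_natCast_ne_zero hm
    have := Gamma_natCast_ne_zero (show m + z ≠ 0 by omega)
    have := Gamma_natCast_ne_zero (show n - z ≠ 0 by omega)
    rw [integral_const_mul, integral_indicator_Ioi_mul_div_pow hzn hm ha hb hc,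
      Nat.sub_add_cancel (Nat.one_le_iff_ne_zero.2 hm)]
    simp only [mul_sum]
    field_simp
    exact sum_congr rfl fun j _ => by ring
  unfold varphiUMBelow
  rw [integral_finsetSum _ fun z _ => (integrable_indicator_Ioi_mul_div_pow
      (by positivity) (by positivity) ha hb hc z).const_mul _, sum_congr rfl hterm,
    ← mul_sum,
    sum_range_sum_range_neg_one_pow_mul_multichoose]

lemma integral_varphiUMAbove (hn : n ≠ 0) (hm : m ≠ 0) (ha : 0 < a) (hb : 0 < b) (hc : 0 < c) :
    ∫ x, varphiUMAbove n m c x ∂(gammaMeasure n a).prod (gammaMeasure m b)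
      = b / (a * c + b) * (a * c / (a * c + b)) ^ n
        * ∑ k ∈ range (m - 1), (n.multichoose k : ℝ) * (b / (a * c + b)) ^ k := by
  have hterm : ∀ z ∈ range (m - 1), ∫ x : ℝ × ℝ, (-1 : ℝ) ^ z
        * (Gamma m * Gamma n / (Gamma (n + z + 1 : ℕ) * Gamma (m - z - 1 : ℕ)))
        * (Ici (x.1 / c)).indicator (fun v => (x.1 / c / v) ^ (z + 1)) x.2
        ∂(gammaMeasure n a).prod (gammaMeasure m b)
      = b / (a * c + b) * (a * c / (a * c + b)) ^ n * ∑ j ∈ range (m - 1 - z),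
          (-1 : ℝ) ^ z * ((n + 1 + z).multichoose j : ℝ) * (b / (a * c + b)) ^ (z + j) := by
    intro z hz
    have hzm := mem_range.1 hz
    rw [integral_const_mul, integral_indicator_Ici_div_div_pow (by omega) hn ha hb hc,
      Nat.sub_sub, ← add_assoc, Nat.add_right_comm n z 1, Nat.sub_sub m 1 z, add_comm 1 z]
    have := Gamma_natCast_ne_zero hn
    have := Gamma_natCast_ne_zero hm
    have := Gamma_natCast_ne_zero (show n + 1 + z ≠ 0 by omega)
    have := Gamma_natCast_ne_zero (show m - (z + 1) ≠ 0 by omega)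
    simp only [mul_sum]
    field_simp
    exact sum_congr rfl fun j _ => by ring
  unfold varphiUMAbove
  rw [integral_finsetSum _ fun z _ => (integrable_indicator_Ici_div_div_pow
      (by positivity) (by positivity) ha hb hc (z + 1)).const_mul _, sum_congr rfl hterm,
    ← mul_sum,
    sum_range_sum_range_neg_one_pow_mul_multichoose]

end Branches

/-- If `U₁ ~ Gamma(n, α₁)` and `U₂ ~ Gamma(m, α₂)` are independent
(shape/rate parametrization) with `n, m ≥ 2` and `c > 0`, then
`E[φ_UM(U₁, U₂)] = α₂ / (c α₁ + α₂)`; i.e. `φ_UM` is an unbiased estimator of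
`φ(α₁, α₂) = α₂/(c α₁ + α₂)`. -/
theorem varphiUM_unbiased
    {Ω : Type*} [MeasurableSpace Ω] (μ : Measure Ω) [IsProbabilityMeasure μ]
    (n m : ℕ) (hn : 2 ≤ n) (hm : 2 ≤ m)
    (c α₁ α₂ : ℝ) (hc : 0 < c) (hα₁ : 0 < α₁) (hα₂ : 0 < α₂)
    (U₁ U₂ : Ω → ℝ) (hU₁m : Measurable U₁) (hU₂m : Measurable U₂)
    (hU₁ : Measure.map U₁ μ = gammaMeasure (n : ℝ) α₁)
    (hU₂ : Measure.map U₂ μ = gammaMeasure (m : ℝ) α₂)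
    (hindep : IndepFun U₁ U₂ μ) :
    ∫ ω, varphiUM n m c (U₁ ω) (U₂ ω) ∂μ = α₂ / (c * α₁ + α₂) := by
  obtain ⟨B, rfl⟩ : ∃ B, m = B + 2 := ⟨m - 2, by omega⟩
  have hsplit : (fun x : ℝ × ℝ => varphiUM n (B + 2) c x.1 x.2)
      = varphiUMBelow n (B + 2) c + varphiUMAbove n (B + 2) c :=
    funext (varphiUM_eq_add n (B + 2) hc)
  have hBelow := integrable_varphiUMBelow (n := n) (m := B + 2) (by omega) (by omega) hα₁ hα₂ hc
  have hAbove := integrable_varphiUMAbove (n := n) (m := B + 2) (by omega) (by omega) hα₁ hα₂ hc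
  rw [hindep.integral_comp_prodMk (f := fun x : ℝ × ℝ => varphiUM n (B + 2) c x.1 x.2)
      hU₁m.aemeasurable hU₂m.aemeasurable (by rw [hU₁, hU₂, hsplit]; exact (hBelow.add hAbove).1),
    hU₁, hU₂, hsplit, integral_add' hBelow hAbove,
    integral_varphiUMBelow (by omega) (by omega) hα₁ hα₂ hc,
    integral_varphiUMAbove (by omega) (by omega) hα₁ hα₂ hc, mul_comm c α₁,
    show B + 2 - 1 = B + 1 from rfl]
  have hpq : α₁ * c / (α₁ * c + α₂) + α₂ / (α₁ * c + α₂) = 1 := by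
    rw [← add_div, div_self (by positivity)]
  linear_combination
    α₂ / (α₁ * c + α₂) * pow_mul_sum_multichoose_add_pow_mul_sum_multichoose hpq n B
end
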